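/- arXiv:math/0410365 — 2 statements merged into one kernel-verified Lean document; each statement's English description precedes it below -/
import Mathlib

section
/- For every Lyndon word α = [a₁, ..., a_m] and every i ≥ 1, in the expansion of d_α(i) in the monomial basis (Z_β)_β of NSymm, the coefficient of Z_{i·g(α)⁻¹·α} (where i·g(α)⁻¹·α denotes the composition [i·a₁/g(α), ..., i·a_m/g(α)]) equals 1, and the coefficient of Z_β equals 0 for every composition β with β <_wll i·g(α)⁻¹·α. -/
open scoped TensorProduct

noncomputable section

/-- `NSymm`, the free ring on `Z₁, Z₂, …`; generator `i : ℕ` represents `Z_{i+1}`. -/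
abbrev NSymm : Type := MonoidAlgebra ℤ (FreeMonoid ℕ)

def Zgen : ℕ → NSymm
  | 0 => 1
  | n + 1 => MonoidAlgebra.of ℤ (FreeMonoid ℕ) (FreeMonoid.of n)

def Zword (l : List ℕ) : NSymm := (l.map Zgen).prod

def Delta : NSymm →ₐ[ℤ] NSymm ⊗[ℤ] NSymm :=
  MonoidAlgebra.lift ℤ (NSymm ⊗[ℤ] NSymm) (FreeMonoid ℕ)
    (FreeMonoid.lift fun i =>
      ∑ a ∈ Finset.range (i + 2), Zgen a ⊗ₜ[ℤ] Zgen (i + 1 - a))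

def IsPrimitive (P : NSymm) : Prop :=
  Delta P = 1 ⊗ₜ[ℤ] P + P ⊗ₜ[ℤ] 1

def Ver (r : ℕ) : NSymm →ₐ[ℤ] NSymm :=
  MonoidAlgebra.lift ℤ NSymm (FreeMonoid ℕ)
    (FreeMonoid.lift fun i => if r ∣ (i + 1) then Zgen ((i + 1) / r) else 0)

def NewtonP (n : ℕ) : NSymm :=
  ∑ c : Composition n,
    ((-1 : ℤ) ^ (c.length + 1) * (c.blocks.getLastD 0 : ℤ)) • Zword c.blocks

def IsComposition (l : List ℕ) : Prop := l ≠ [] ∧ ∀ a ∈ l, 0 < a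

def lexLt (l l' : List ℕ) : Prop := List.Lex (· < ·) l l'

def IsLyndon (l : List ℕ) : Prop :=
  IsComposition l ∧ ∀ i, 0 < i → i < l.length → lexLt l (l.drop i)

def gcdL (l : List ℕ) : ℕ := l.foldr Nat.gcd 0

def wtC (l : List ℕ) : ℕ := l.sum

def wllLt (l l' : List ℕ) : Prop :=
  wtC l < wtC l' ∨ (wtC l = wtC l' ∧
    (l.length < l'.length ∨ (l.length = l'.length ∧ lexLt l l')))

def coeffw (P : NSymm) (w : FreeMonoid ℕ) : ℤ := P.coeff w

def coeffC (P : NSymm) (l : List ℕ) : ℤ := coeffw P (FreeMonoid.ofList (l.map (· - 1)))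

def wtWord (w : FreeMonoid ℕ) : ℕ := (FreeMonoid.toList w).sum + (FreeMonoid.toList w).length

def IsHomog (P : NSymm) (n : ℕ) : Prop := ∀ w, coeffw P w ≠ 0 → wtWord w = n

abbrev TwoNSymm : Type := MonoidAlgebra ℤ (FreeMonoid (ℕ ⊕ ℕ))

def Xgen : ℕ → TwoNSymm
  | 0 => 1
  | n + 1 => MonoidAlgebra.of ℤ (FreeMonoid (ℕ ⊕ ℕ)) (FreeMonoid.of (Sum.inl n))

def Ygen : ℕ → TwoNSymm
  | 0 => 1
  | n + 1 => MonoidAlgebra.of ℤ (FreeMonoid (ℕ ⊕ ℕ)) (FreeMonoid.of (Sum.inr n))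

def Delta2 : TwoNSymm →ₐ[ℤ] TwoNSymm ⊗[ℤ] TwoNSymm :=
  MonoidAlgebra.lift ℤ (TwoNSymm ⊗[ℤ] TwoNSymm) (FreeMonoid (ℕ ⊕ ℕ))
    (FreeMonoid.lift fun s =>
      Sum.elim
        (fun i => ∑ a ∈ Finset.range (i + 2), Xgen a ⊗ₜ[ℤ] Xgen (i + 1 - a))
        (fun i => ∑ a ∈ Finset.range (i + 2), Ygen a ⊗ₜ[ℤ] Ygen (i + 1 - a)) s)

def Ver2 (r : ℕ) : TwoNSymm →ₐ[ℤ] TwoNSymm :=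
  MonoidAlgebra.lift ℤ TwoNSymm (FreeMonoid (ℕ ⊕ ℕ))
    (FreeMonoid.lift fun s =>
      Sum.elim
        (fun i => if r ∣ (i + 1) then Xgen ((i + 1) / r) else 0)
        (fun i => if r ∣ (i + 1) then Ygen ((i + 1) / r) else 0) s)

def coeffw2 (P : TwoNSymm) (w : FreeMonoid (ℕ ⊕ ℕ)) : ℤ := P.coeff w

def xwt (w : FreeMonoid (ℕ ⊕ ℕ)) : ℕ :=
  ((FreeMonoid.toList w).map (Sum.elim (· + 1) (fun _ => 0))).sum

def ywt (w : FreeMonoid (ℕ ⊕ ℕ)) : ℕ :=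
  ((FreeMonoid.toList w).map (Sum.elim (fun _ => 0) (· + 1))).sum

def wlLt (p q : ℕ × ℕ) : Prop :=
  p.1 + p.2 < q.1 + q.2 ∨ (p.1 + p.2 = q.1 + q.2 ∧ p.1 < q.1)

def reduceP (p : ℕ × ℕ) : ℕ × ℕ := (p.1 / Nat.gcd p.1 p.2, p.2 / Nat.gcd p.1 p.2)

def LIdentity (L : ℕ → ℕ → TwoNSymm) : Prop :=
  ∀ u v : ℕ, 1 ≤ u → 1 ≤ v →
    Xgen u * Ygen v - Ygen v * Xgen u =
      ∑ᶠ p ∈ {p : (ℕ × ℕ) × List (ℕ × ℕ) |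
          p.2 ≠ [] ∧ (∀ q ∈ p.2, 0 < q.1 ∧ 0 < q.2) ∧
          p.1.1 + (p.2.map Prod.fst).sum = u ∧
          p.1.2 + (p.2.map Prod.snd).sum = v ∧
          (p.2.map reduceP).Pairwise wlLt},
        Ygen p.1.2 * Xgen p.1.1 * (p.2.map fun q => L q.1 q.2).prod

def NIdentity (N : ℕ → ℕ → NSymm) : Prop :=
  ∀ u v : ℕ, 1 ≤ u → 1 ≤ v →
    (((u + v).choose u : ℤ)) • Zgen (u + v) =
      ∑ᶠ p ∈ {p : (ℕ × ℕ) × List (ℕ × ℕ) |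
          (∀ q ∈ p.2, 0 < q.1 ∧ 0 < q.2) ∧
          p.1.1 + (p.2.map Prod.fst).sum = u ∧
          p.1.2 + (p.2.map Prod.snd).sum = v ∧
          (p.2.map reduceP).Pairwise wlLt},
        Zgen p.1.1 * Zgen p.1.2 * (p.2.map fun q => N q.1 q.2).prod

def substXY (d1 d2 : ℕ → NSymm) : TwoNSymm →ₐ[ℤ] NSymm :=
  MonoidAlgebra.lift ℤ NSymm (FreeMonoid (ℕ ⊕ ℕ))
    (FreeMonoid.lift fun s => Sum.elim (fun i => d1 (i + 1)) (fun i => d2 (i + 1)) s)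

def substZ (e : ℕ → NSymm) : NSymm →ₐ[ℤ] NSymm :=
  MonoidAlgebra.lift ℤ NSymm (FreeMonoid ℕ) (FreeMonoid.lift fun i => e (i + 1))

def dSpec (L : ℕ → ℕ → TwoNSymm) (d : List ℕ → ℕ → NSymm) : Prop :=
  (∀ l, IsLyndon l → d l 0 = 1) ∧
  (∀ n, 0 < n → ∀ i, d [n] i = Zgen i) ∧
  (∀ l, IsLyndon l → 1 < l.length →
    ∀ i₀, 0 < i₀ → i₀ < l.length →
      (∀ j, 0 < j → j < l.length → ¬ lexLt (l.drop j) (l.drop i₀)) →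
      ∀ i, d l i =
        substXY (d (l.take i₀)) (d (l.drop i₀))
          (L (i * gcdL (l.take i₀) / gcdL l) (i * gcdL (l.drop i₀) / gcdL l)))

def Pof (d : List ℕ → ℕ → NSymm) (l : List ℕ) : NSymm := substZ (d l) (NewtonP (gcdL l))

def IsCurveN (c : ℕ → NSymm) : Prop :=
  c 0 = 1 ∧ ∀ n, Delta (c n) = ∑ i ∈ Finset.range (n + 1), c i ⊗ₜ[ℤ] c (n - i)

def IsCurve2 (c : ℕ → TwoNSymm) : Prop :=
  c 0 = 1 ∧ ∀ n, Delta2 (c n) = ∑ i ∈ Finset.range (n + 1), c i ⊗ₜ[ℤ] c (n - i)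

def IsVCurveN (c : ℕ → NSymm) : Prop :=
  IsCurveN c ∧ ∀ r n, 1 ≤ r → 1 ≤ n → Ver r (c n) = if r ∣ n then c (n / r) else 0

def IsCurveB (R : Type) [CommRing R] {H : Type} [Ring H] [Bialgebra R H] (c : ℕ → H) : Prop :=
  c 0 = 1 ∧ ∀ n, Coalgebra.comul (R := R) (c n) = ∑ i ∈ Finset.range (n + 1), c i ⊗ₜ[R] c (n - i)

def Is2CurveB (R : Type) [CommRing R] {H : Type} [Ring H] [Bialgebra R H]
    (c : ℕ → ℕ → H) : Prop :=
  c 0 0 = 1 ∧ ∀ n m, Coalgebra.comul (R := R) (c n m) =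
    ∑ i ∈ Finset.range (n + 1), ∑ j ∈ Finset.range (m + 1),
      c i j ⊗ₜ[R] c (n - i) (m - j)

def Mq (α : List ℕ) : MvPowerSeries ℕ ℤ :=
  fun m => if (m.support.sort (· ≤ ·)).map m = α then 1 else 0

def degm (m : ℕ →₀ ℕ) : ℕ := m.sum fun _ e => e

def QSymmMod : Submodule ℤ (MvPowerSeries ℕ ℤ) :=
  Submodule.span ℤ (insert 1 {f | ∃ α : List ℕ, IsComposition α ∧ f = Mq α})

abbrev NSymmQ : Type := MonoidAlgebra ℚ (FreeMonoid ℕ)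

def ZgenQ : ℕ → NSymmQ
  | 0 => 1
  | n + 1 => MonoidAlgebra.of ℚ (FreeMonoid ℕ) (FreeMonoid.of n)

def DeltaQ : NSymmQ →ₐ[ℚ] NSymmQ ⊗[ℚ] NSymmQ :=
  MonoidAlgebra.lift ℚ (NSymmQ ⊗[ℚ] NSymmQ) (FreeMonoid ℕ)
    (FreeMonoid.lift fun i =>
      ∑ a ∈ Finset.range (i + 2), ZgenQ a ⊗ₜ[ℚ] ZgenQ (i + 1 - a))

def IsPrimitiveQ (P : NSymmQ) : Prop :=
  DeltaQ P = 1 ⊗ₜ[ℚ] P + P ⊗ₜ[ℚ] 1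

def toQ : NSymm →ₐ[ℤ] NSymmQ :=
  MonoidAlgebra.lift ℤ NSymmQ (FreeMonoid ℕ) (MonoidAlgebra.of ℚ (FreeMonoid ℕ))

/-!
Induction on the length of `α`. For `α = α′αʺ` the standard factorization, `d_α(i)` is
`L_{u,v}` evaluated at the curves `d_{α′}`, `d_{αʺ}`, whose leading words are, by induction, the
scaled words of `α′` and `αʺ`. The wll-order on words is compatible with concatenation, so in
`L_{u,v} = X_u Y_v - Y_v X_u - (corrections)` the term `X_u Y_v` has as leading word the
concatenation of the two leading words, which is the scaled word of `α`. All words of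
`Y_v X_u` are at least the rotated word, which is lexicographically larger because `α` is
Lyndon. By a separate induction on `a + b`, every word of `L_{a,b}(d_{α′}, d_{αʺ})` is, in the
lexicographic (weight, length) order, at least the leading word of `X_a Y_b`. A correction term
`Y_{v₀} X_{u₀} L_{u₁,v₁} ⋯ L_{u_k,v_k}` has `k ≥ 2` or a nontrivial factor `X_{u₀}` or `Y_{v₀}`,
so its words of the right weight are strictly longer than `α`.
-/

section Words

open FreeMonoid

def wordGrade (w : FreeMonoid ℕ) : ℕ ×ₗ ℕ := toLex (wtWord w, (toList w).length)

lemma wordGrade_one : wordGrade 1 = 0 := rfl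

lemma wordGrade_mul (v w : FreeMonoid ℕ) : wordGrade (v * w) = wordGrade v + wordGrade w := by
  simp only [wordGrade, wtWord, toList_mul, List.sum_append, List.length_append]
  rw [← toLex_add, Prod.mk_add_mk]
  congr 2
  ring

/-- Sort key of the wll-order on words. -/
def wllKey (w : FreeMonoid ℕ) : (ℕ ×ₗ ℕ) ×ₗ List ℕ := toLex (wordGrade w, toList w)

lemma wllKey_le_iff {v w : FreeMonoid ℕ} : wllKey v ≤ wllKey w ↔
    wordGrade v < wordGrade w ∨ wordGrade v = wordGrade w ∧ toList v ≤ toList w :=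
  Prod.Lex.toLex_le_toLex

lemma wordGrade_le_of_wllKey_le {v w : FreeMonoid ℕ} (h : wllKey v ≤ wllKey w) :
    wordGrade v ≤ wordGrade w := by
  rcases wllKey_le_iff.1 h with h | h
  exacts [h.le, h.1.le]

lemma List.Lex.append_of_not_prefix {α : Type*} {r : α → α → Prop} {l l' : List α}
    (h : List.Lex r l l') (hp : ¬ l <+: l') (s t : List α) : List.Lex r (l ++ s) (l' ++ t) := by
  induction h with
  | nil => exact absurd List.nil_prefix hp
  | rel h => exact List.Lex.rel h
  | cons _ ih => exact List.Lex.cons (ih fun hpre => hp ((List.prefix_cons_inj _).2 hpre))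

lemma List.append_le_append_of_length_eq {α : Type*} [LinearOrder α] {v w x y : List α}
    (hlen : v.length = w.length) (hvw : v ≤ w) (hxy : x ≤ y) : v ++ x ≤ w ++ y := by
  rcases hvw.lt_or_eq with hvw | rfl
  · exact le_of_lt (List.Lex.append_of_not_prefix hvw (fun hp => hvw.ne (hp.eq_of_length hlen)) x y)
  · rcases hxy.lt_or_eq with hxy | rfl
    exacts [(List.append_left_lt hxy).le, le_rfl]

lemma wllKey_mul_le_mul {a b c d : FreeMonoid ℕ} (hab : wllKey a ≤ wllKey b)
    (hcd : wllKey c ≤ wllKey d) : wllKey (a * c) ≤ wllKey (b * d) := by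
  have hgab := wordGrade_le_of_wllKey_le hab
  have hgcd := wordGrade_le_of_wllKey_le hcd
  rcases wllKey_le_iff.1 hab with hab | ⟨egab, hab⟩
  · exact wllKey_le_iff.2
      (Or.inl (by simpa only [wordGrade_mul] using add_lt_add_of_lt_of_le hab hgcd))
  rcases wllKey_le_iff.1 hcd with hcd | ⟨egcd, hcd⟩
  · exact wllKey_le_iff.2
      (Or.inl (by simpa only [wordGrade_mul] using add_lt_add_of_le_of_lt hgab hcd))
  refine wllKey_le_iff.2 (Or.inr ⟨by rw [wordGrade_mul, wordGrade_mul, egab, egcd], ?_⟩)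
  rw [toList_mul, toList_mul]
  exact List.append_le_append_of_length_eq (congrArg (fun g => (ofLex g).2) egab) hab hcd

lemma eq_and_eq_of_mul_eq_mul {a b w x : FreeMonoid ℕ} (hwa : wllKey w ≤ wllKey a)
    (hxb : wllKey x ≤ wllKey b) (h : a * b = w * x) : a = w ∧ b = x := by
  have hg := congrArg wordGrade h
  rw [wordGrade_mul, wordGrade_mul] at hg
  have hga := ((add_eq_add_iff_eq_and_eq (wordGrade_le_of_wllKey_le hwa)
    (wordGrade_le_of_wllKey_le hxb)).1 hg.symm).1
  have := List.append_inj (congrArg toList h) (congrArg (fun g => (ofLex g).2) hga).symm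
  exact ⟨toList.injective this.1, toList.injective this.2⟩

end Words

section Filtration

variable {R : Type*} [Ring R]

def GradeGE (P : MonoidAlgebra R (FreeMonoid ℕ)) (g : ℕ ×ₗ ℕ) : Prop :=
  ∀ w ∈ P.coeff.support, g ≤ wordGrade w

def HasLeadingWord (P : MonoidAlgebra R (FreeMonoid ℕ)) (w : FreeMonoid ℕ) : Prop :=
  (∀ v ∈ P.coeff.support, wllKey w ≤ wllKey v) ∧ P.coeff w = 1

lemma gradeGE_one : GradeGE (1 : MonoidAlgebra R (FreeMonoid ℕ)) 0 := by
  intro w hw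
  rw [Finset.mem_one.1 (MonoidAlgebra.support_coeff_one_subset hw), wordGrade_one]

namespace GradeGE

variable {P Q : MonoidAlgebra R (FreeMonoid ℕ)} {g h : ℕ ×ₗ ℕ}

lemma mono (hP : GradeGE P g) (hhg : h ≤ g) : GradeGE P h :=
  fun w hw => hhg.trans (hP w hw)

lemma mul (hP : GradeGE P g) (hQ : GradeGE Q h) : GradeGE (P * Q) (g + h) := by
  classical
  intro w hw
  obtain ⟨a, ha, b, hb, rfl⟩ := Finset.mem_mul.1 (MonoidAlgebra.support_coeff_mul_subset P Q hw)
  rw [wordGrade_mul]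
  exact add_le_add (hP a ha) (hQ b hb)

lemma sub (hP : GradeGE P g) (hQ : GradeGE Q g) : GradeGE (P - Q) g := by
  classical
  intro w hw
  rw [MonoidAlgebra.coeff_sub] at hw
  rcases Finset.mem_union.1 (Finsupp.support_sub hw) with hw | hw
  exacts [hP w hw, hQ w hw]

lemma finsetSum {ι : Type*} {s : Finset ι} {f : ι → MonoidAlgebra R (FreeMonoid ℕ)}
    (hf : ∀ i ∈ s, GradeGE (f i) g) : GradeGE (∑ i ∈ s, f i) g := by
  classical
  intro w hw
  rw [MonoidAlgebra.coeff_sum] at hw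
  obtain ⟨i, hi, hw⟩ := Finset.mem_biUnion.1 (Finsupp.support_finsetSum hw)
  exact hf i hi w hw

lemma listProd {ι : Type*} {f : ι → MonoidAlgebra R (FreeMonoid ℕ)} {g : ι → ℕ ×ₗ ℕ} :
    ∀ l : List ι, (∀ i ∈ l, GradeGE (f i) (g i)) → GradeGE (l.map f).prod (l.map g).sum
  | [], _ => gradeGE_one
  | i :: l, hl => by
    rw [List.map_cons, List.map_cons, List.prod_cons, List.sum_cons]
    exact (hl i List.mem_cons_self).mul (listProd l fun j hj => hl j (List.mem_cons_of_mem i hj))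

lemma wllKey_lt (hQ : GradeGE Q g) {w : FreeMonoid ℕ} (hw : wordGrade w < g) :
    ∀ v ∈ Q.coeff.support, wllKey w < wllKey v :=
  fun v hv => Prod.Lex.toLex_lt_toLex.2 (Or.inl (hw.trans_le (hQ v hv)))

end GradeGE

namespace HasLeadingWord

variable {P Q : MonoidAlgebra R (FreeMonoid ℕ)} {w x : FreeMonoid ℕ}

lemma gradeGE (hP : HasLeadingWord P w) : GradeGE P (wordGrade w) :=
  fun v hv => wordGrade_le_of_wllKey_le (hP.1 v hv)

lemma wllKey_lt_of_lt (hP : HasLeadingWord P w) {v : FreeMonoid ℕ} (hvw : wllKey v < wllKey w) :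
    ∀ u ∈ P.coeff.support, wllKey v < wllKey u :=
  fun u hu => hvw.trans_le (hP.1 u hu)

lemma mul (hP : HasLeadingWord P w) (hQ : HasLeadingWord Q x) : HasLeadingWord (P * Q) (w * x) := by
  classical
  refine ⟨fun v hv => ?_, ?_⟩
  · obtain ⟨a, ha, b, hb, rfl⟩ := Finset.mem_mul.1 (MonoidAlgebra.support_coeff_mul_subset P Q hv)
    exact wllKey_mul_le_mul (hP.1 a ha) (hQ.1 b hb)
  · rw [MonoidAlgebra.coeff_mul, Finsupp.sum_eq_single w, Finsupp.sum_eq_single x, if_pos rfl,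
      hP.2, hQ.2, one_mul]
    · intro b hb hbx
      exact if_neg fun h =>
        hbx (eq_and_eq_of_mul_eq_mul le_rfl (hQ.1 b (Finsupp.mem_support_iff.2 hb)) h).2
    · simp
    · intro a ha haw
      refine Finset.sum_eq_zero fun b hb => if_neg fun h => haw ?_
      exact (eq_and_eq_of_mul_eq_mul (hP.1 a (Finsupp.mem_support_iff.2 ha)) (hQ.1 b hb) h).1
    · simp

lemma sub (hP : HasLeadingWord P w) (hQ : ∀ v ∈ Q.coeff.support, wllKey w < wllKey v) :
    HasLeadingWord (P - Q) w := by
  classical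
  refine ⟨fun v hv => ?_, ?_⟩
  · rw [MonoidAlgebra.coeff_sub] at hv
    rcases Finset.mem_union.1 (Finsupp.support_sub hv) with hv | hv
    exacts [hP.1 v hv, (hQ v hv).le]
  · rw [MonoidAlgebra.coeff_sub, Finsupp.sub_apply, hP.2,
      Finsupp.notMem_support_iff.1 fun h => (hQ w h).false, sub_zero]

end HasLeadingWord

end Filtration

section LIdentity

lemma List.finite_length_le_of_forall_mem {γ : Type*} {s : Set γ} (hs : s.Finite) (n : ℕ) :
    {l : List γ | l.length ≤ n ∧ ∀ q ∈ l, q ∈ s}.Finite := by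
  have := hs.to_subtype
  refine ((List.finite_length_le s n).image (List.map Subtype.val)).subset ?_
  rintro l ⟨hlen, hmem⟩
  exact ⟨l.attach.map fun q => ⟨q.1, hmem q.1 q.2⟩, by simpa using hlen,
    by simp [Function.comp_def]⟩

def lIndexSet (u v : ℕ) : Set ((ℕ × ℕ) × List (ℕ × ℕ)) :=
  {p | p.2 ≠ [] ∧ (∀ q ∈ p.2, 0 < q.1 ∧ 0 < q.2) ∧
    p.1.1 + (p.2.map Prod.fst).sum = u ∧
    p.1.2 + (p.2.map Prod.snd).sum = v ∧
    (p.2.map reduceP).Pairwise wlLt}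

def lTerm (L : ℕ → ℕ → TwoNSymm) (p : (ℕ × ℕ) × List (ℕ × ℕ)) : TwoNSymm :=
  Ygen p.1.2 * Xgen p.1.1 * (p.2.map fun q => L q.1 q.2).prod

lemma lIndexSet_finite (u v : ℕ) : (lIndexSet u v).Finite := by
  have hbox : (Set.Iic (u, v)).Finite := Set.finite_Iic _
  refine (hbox.prod (List.finite_length_le_of_forall_mem hbox u)).subset ?_
  rintro ⟨⟨u₀, v₀⟩, l⟩ ⟨-, hpos, hsu, hsv, -⟩
  dsimp only at hpos hsu hsv
  have hfst : ∀ q ∈ l, q.1 ≤ (l.map Prod.fst).sum :=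
    fun q hq => List.le_sum_of_mem (List.mem_map_of_mem hq)
  have hsnd : ∀ q ∈ l, q.2 ≤ (l.map Prod.snd).sum :=
    fun q hq => List.le_sum_of_mem (List.mem_map_of_mem hq)
  have hlen : l.length ≤ (l.map Prod.fst).sum := by
    simpa using List.length_le_sum_of_one_le (l.map Prod.fst)
      (by simpa using fun a b h => Nat.succ_le_of_lt (hpos (a, b) h).1)
  simp only [Set.mem_prod, Set.mem_Iic, Set.mem_ofPred_eq, Prod.mk_le_mk]
  exact ⟨⟨by omega, by omega⟩, by omega, fun q hq => ⟨by grind, by grind⟩⟩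

/-- The correction terms of `LIdentity`; `((0, 0), [(u, v)])` indexes `L u v` itself. -/
def lCorrections (u v : ℕ) : Finset ((ℕ × ℕ) × List (ℕ × ℕ)) :=
  (lIndexSet_finite u v).toFinset.erase ((0, 0), [(u, v)])

lemma L_eq_sub_sum {L : ℕ → ℕ → TwoNSymm} (hL : LIdentity L) {u v : ℕ} (hu : 1 ≤ u)
    (hv : 1 ≤ v) :
    L u v = Xgen u * Ygen v - Ygen v * Xgen u - ∑ p ∈ lCorrections u v, lTerm L p := by
  have key : Xgen u * Ygen v - Ygen v * Xgen u = ∑ᶠ p ∈ lIndexSet u v, lTerm L p := hL u v hu hv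
  have hbase : ((0, 0), [(u, v)]) ∈ (lIndexSet_finite u v).toFinset :=
    (Set.Finite.mem_toFinset _).2 ⟨List.cons_ne_nil _ _,
      fun q hq => List.mem_singleton.1 hq ▸ ⟨hu, hv⟩, by simp, by simp, List.pairwise_singleton _ _⟩
  rw [finsum_mem_eq_finite_toFinset_sum _ (lIndexSet_finite u v),
    ← Finset.add_sum_erase _ _ hbase] at key
  rw [key, lCorrections, add_sub_cancel_right]
  simp [lTerm, Xgen, Ygen]

section Corrections

variable {u v : ℕ} {p : (ℕ × ℕ) × List (ℕ × ℕ)}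

lemma mem_lIndexSet_of_mem_lCorrections (hp : p ∈ lCorrections u v) :
    p ∈ lIndexSet u v :=
  (Set.Finite.mem_toFinset _).1 (Finset.mem_of_mem_erase hp)

lemma ne_zero_or_ne_zero_of_mem_lCorrections (hp : p ∈ lCorrections u v) {q : ℕ × ℕ}
    (hq : p.2 = [q]) : p.1.1 ≠ 0 ∨ p.1.2 ≠ 0 := by
  obtain ⟨-, -, hsu, hsv, -⟩ := mem_lIndexSet_of_mem_lCorrections hp
  by_contra! h0
  refine Finset.ne_of_mem_erase hp (Prod.ext (Prod.ext h0.1 h0.2) ?_)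
  simp_all [Prod.ext_iff]

lemma lt_of_mem_lCorrections (hp : p ∈ lCorrections u v) {q : ℕ × ℕ} (hq : q ∈ p.2) :
    q.1 + q.2 < u + v := by
  obtain ⟨-, hpos, hsu, hsv, -⟩ := mem_lIndexSet_of_mem_lCorrections hp
  have h₂ : q.2 ≤ (p.2.map Prod.snd).sum := List.le_sum_of_mem (List.mem_map_of_mem hq)
  by_cases hl : p.2 = [q]
  · have := ne_zero_or_ne_zero_of_mem_lCorrections hp hl
    rw [hl] at hsu hsv
    simp only [List.map_cons, List.map_nil, List.sum_cons, List.sum_nil] at hsu hsv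
    omega
  · have hperm := List.perm_cons_erase hq
    obtain ⟨b, hb⟩ := List.exists_mem_of_ne_nil (p.2.erase q)
      fun h => hl (by simpa [h] using hperm)
    have h₁ := List.le_sum_of_mem (List.mem_map_of_mem (f := Prod.fst) hb)
    have hb₁ := (hpos b (List.mem_of_mem_erase hb)).1
    rw [(hperm.map Prod.fst).sum_eq, List.map_cons, List.sum_cons] at hsu
    omega

lemma length_le_of_mem_lCorrections (hp : p ∈ lCorrections u v) {m₁ m₂ : ℕ} (h₁ : 1 ≤ m₁)
    (h₂ : 1 ≤ m₂) :
    m₁ + m₂ + 1 ≤ (if p.1.2 = 0 then 0 else m₂) + (if p.1.1 = 0 then 0 else m₁) +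
      p.2.length * (m₁ + m₂) := by
  obtain ⟨hne, -⟩ := mem_lIndexSet_of_mem_lCorrections hp
  match hl : p.2 with
  | [] => exact absurd hl hne
  | [q] =>
    have := ne_zero_or_ne_zero_of_mem_lCorrections hp hl
    simp only [List.length_cons, List.length_nil]
    split_ifs <;> omega
  | _ :: _ :: l =>
    have : 2 * (m₁ + m₂) ≤ (l.length + 1 + 1) * (m₁ + m₂) := Nat.mul_le_mul_right _ (by omega)
    simp only [List.length_cons]
    omega

end Corrections

end LIdentity

section Substitution

lemma substXY_Xgen {d₁ : ℕ → NSymm} (d₂ : ℕ → NSymm) (h : d₁ 0 = 1) (j : ℕ) :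
    substXY d₁ d₂ (Xgen j) = d₁ j := by
  cases j with
  | zero => rw [h]; exact map_one _
  | succ j => exact (MonoidAlgebra.lift_of _ _).trans (FreeMonoid.lift_eval_of _ _)

lemma substXY_Ygen (d₁ : ℕ → NSymm) {d₂ : ℕ → NSymm} (h : d₂ 0 = 1) (j : ℕ) :
    substXY d₁ d₂ (Ygen j) = d₂ j := by
  cases j with
  | zero => rw [h]; exact map_one _
  | succ j => exact (MonoidAlgebra.lift_of _ _).trans (FreeMonoid.lift_eval_of _ _)

structure LeadingCurve (D : ℕ → NSymm) (W : ℕ → FreeMonoid ℕ) (c m : ℕ) : Prop where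
  zero : D 0 = 1
  hasLeadingWord : ∀ j, 1 ≤ j → HasLeadingWord (D j) (W j)
  wordGrade_eq : ∀ j, 1 ≤ j → wordGrade (W j) = toLex (j * c, m)
  one_le : 1 ≤ m

namespace LeadingCurve

variable {D : ℕ → NSymm} {W : ℕ → FreeMonoid ℕ} {c m : ℕ}

lemma gradeGE (h : LeadingCurve D W c m) (j : ℕ) :
    GradeGE (D j) (toLex (j * c, if j = 0 then 0 else m)) := by
  rcases Nat.eq_zero_or_pos j with rfl | hj
  · rw [h.zero, if_pos rfl, zero_mul]
    exact gradeGE_one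
  · rw [if_neg hj.ne', ← h.wordGrade_eq j hj]
    exact (h.hasLeadingWord j hj).gradeGE

end LeadingCurve

variable {L : ℕ → ℕ → TwoNSymm} {D₁ D₂ : ℕ → NSymm} {W₁ W₂ : ℕ → FreeMonoid ℕ} {c₁ c₂ m₁ m₂ : ℕ}

lemma List.sum_map_toLex {ι M N : Type*} [AddMonoid M] [AddMonoid N] (l : List ι) (f : ι → M)
    (g : ι → N) :
    (l.map fun i => toLex (f i, g i)).sum = toLex ((l.map f).sum, (l.map g).sum) := by
  induction l with
  | nil => rfl
  | cons i l ih => simp only [List.map_cons, List.sum_cons, ih]; rfl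

lemma gradeGE_substXY_lTerm (h₁ : LeadingCurve D₁ W₁ c₁ m₁) (h₂ : LeadingCurve D₂ W₂ c₂ m₂)
    {u v : ℕ} {p : (ℕ × ℕ) × List (ℕ × ℕ)} (hp : p ∈ lCorrections u v)
    (hL : ∀ q ∈ p.2, GradeGE (substXY D₁ D₂ (L q.1 q.2)) (toLex (q.1 * c₁ + q.2 * c₂, m₁ + m₂))) :
    GradeGE (substXY D₁ D₂ (lTerm L p)) (toLex (u * c₁ + v * c₂, m₁ + m₂ + 1)) := by
  obtain ⟨-, -, hsu, hsv, -⟩ := mem_lIndexSet_of_mem_lCorrections hp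
  rw [lTerm, map_mul, map_mul, substXY_Xgen _ h₁.zero, substXY_Ygen _ h₂.zero, map_list_prod,
    List.map_map]
  refine (((h₂.gradeGE _).mul (h₁.gradeGE _)).mul (GradeGE.listProd p.2 hL)).mono ?_
  rw [List.sum_map_toLex, ← toLex_add, ← toLex_add, Prod.Lex.toLex_le_toLex]
  refine Or.inr ⟨?_, ?_⟩
  · simp only [Prod.mk_add_mk, List.sum_map_add, List.sum_map_mul_right, ← hsu, ← hsv]
    ring
  · simpa using length_le_of_mem_lCorrections hp h₁.one_le h₂.one_le

lemma substXY_L_eq (hL : LIdentity L) (h₁ : LeadingCurve D₁ W₁ c₁ m₁)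
    (h₂ : LeadingCurve D₂ W₂ c₂ m₂) {u v : ℕ} (hu : 1 ≤ u) (hv : 1 ≤ v) :
    substXY D₁ D₂ (L u v) =
      D₁ u * D₂ v - D₂ v * D₁ u - ∑ p ∈ lCorrections u v, substXY D₁ D₂ (lTerm L p) := by
  rw [L_eq_sub_sum hL hu hv, map_sub, map_sub, map_sum, map_mul, map_mul,
    substXY_Xgen _ h₁.zero, substXY_Ygen _ h₂.zero]

lemma wordGrade_mul_eq (h₁ : LeadingCurve D₁ W₁ c₁ m₁) (h₂ : LeadingCurve D₂ W₂ c₂ m₂)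
    {u v : ℕ} (hu : 1 ≤ u) (hv : 1 ≤ v) :
    wordGrade (W₁ u * W₂ v) = toLex (u * c₁ + v * c₂, m₁ + m₂) := by
  rw [wordGrade_mul, h₁.wordGrade_eq u hu, h₂.wordGrade_eq v hv]
  rfl

lemma gradeGE_substXY_L (hL : LIdentity L) (h₁ : LeadingCurve D₁ W₁ c₁ m₁)
    (h₂ : LeadingCurve D₂ W₂ c₂ m₂) {u v : ℕ} (hu : 1 ≤ u) (hv : 1 ≤ v) :
    GradeGE (substXY D₁ D₂ (L u v)) (toLex (u * c₁ + v * c₂, m₁ + m₂)) := by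
  induction hn : u + v using Nat.strong_induction_on generalizing u v with
  | _ n ih =>
    have hgrade := wordGrade_mul_eq h₁ h₂ hu hv
    have hXY := ((h₁.hasLeadingWord u hu).mul (h₂.hasLeadingWord v hv)).gradeGE
    have hYX := ((h₂.hasLeadingWord v hv).mul (h₁.hasLeadingWord u hu)).gradeGE
    rw [wordGrade_mul, add_comm, ← wordGrade_mul] at hYX
    rw [substXY_L_eq hL h₁ h₂ hu hv, ← hgrade]
    refine ((hXY.sub hYX).sub (GradeGE.finsetSum fun p hp => ?_))
    refine (gradeGE_substXY_lTerm h₁ h₂ hp fun q hq => ?_).mono ?_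
    · have hpos := (mem_lIndexSet_of_mem_lCorrections hp).2.1 q hq
      exact ih _ (hn ▸ lt_of_mem_lCorrections hp hq) hpos.1 hpos.2 rfl
    · rw [hgrade, Prod.Lex.toLex_le_toLex]
      exact Or.inr ⟨rfl, Nat.le_succ _⟩

lemma hasLeadingWord_substXY_L (hL : LIdentity L) (h₁ : LeadingCurve D₁ W₁ c₁ m₁)
    (h₂ : LeadingCurve D₂ W₂ c₂ m₂) {u v : ℕ} (hu : 1 ≤ u) (hv : 1 ≤ v)
    (hlex : FreeMonoid.toList (W₁ u * W₂ v) < FreeMonoid.toList (W₂ v * W₁ u)) :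
    HasLeadingWord (substXY D₁ D₂ (L u v)) (W₁ u * W₂ v) := by
  have hgrade := wordGrade_mul_eq h₁ h₂ hu hv
  have hXY := (h₁.hasLeadingWord u hu).mul (h₂.hasLeadingWord v hv)
  have hYX := (h₂.hasLeadingWord v hv).mul (h₁.hasLeadingWord u hu)
  have hkey : wllKey (W₁ u * W₂ v) < wllKey (W₂ v * W₁ u) := by
    refine Prod.Lex.toLex_lt_toLex.2 (Or.inr ⟨?_, hlex⟩)
    rw [wordGrade_mul, wordGrade_mul, add_comm]
  have hcorr : GradeGE (∑ p ∈ lCorrections u v, substXY D₁ D₂ (lTerm L p))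
      (toLex (u * c₁ + v * c₂, m₁ + m₂ + 1)) :=
    GradeGE.finsetSum fun p hp => gradeGE_substXY_lTerm h₁ h₂ hp fun q hq =>
      have hpos := (mem_lIndexSet_of_mem_lCorrections hp).2.1 q hq
      gradeGE_substXY_L hL h₁ h₂ hpos.1 hpos.2
  rw [substXY_L_eq hL h₁ h₂ hu hv]
  refine (hXY.sub (hYX.wllKey_lt_of_lt hkey)).sub (hcorr.wllKey_lt ?_)
  rw [hgrade, Prod.Lex.toLex_lt_toLex]
  exact Or.inr ⟨rfl, Nat.lt_succ_self _⟩

end Substitution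

section Lyndon

lemma List.lex_append_left_iff {α : Type*} {r : α → α → Prop} [Std.Irrefl r] (s x y : List α) :
    List.Lex r (s ++ x) (s ++ y) ↔ List.Lex r x y := by
  induction s with
  | nil => rfl
  | cons a s ih => rw [List.cons_append, List.cons_append, List.lex_cons_iff, ih]

lemma IsComposition.drop {l : List ℕ} (hl : IsComposition l) {n : ℕ} (hn : n < l.length) :
    IsComposition (l.drop n) :=
  ⟨by simpa using hn, fun a ha => hl.2 a (List.mem_of_mem_drop ha)⟩

lemma IsComposition.take {l : List ℕ} (hl : IsComposition l) {n : ℕ} (hn : 0 < n) :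
    IsComposition (l.take n) :=
  ⟨by simpa [← List.length_pos_iff] using ⟨hn.ne', List.length_pos_iff.2 hl.1⟩,
    fun a ha => hl.2 a (List.mem_of_mem_take ha)⟩

/-- `α = α.take i₀ ++ α.drop i₀` is the standard factorization `α′αʺ`. -/
def IsMinSuffixIndex (α : List ℕ) (i₀ : ℕ) : Prop :=
  0 < i₀ ∧ i₀ < α.length ∧ ∀ j, 0 < j → j < α.length → ¬ lexLt (α.drop j) (α.drop i₀)

lemma exists_isMinSuffixIndex {α : List ℕ} (h : 2 ≤ α.length) : ∃ i₀, IsMinSuffixIndex α i₀ := by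
  obtain ⟨i₀, hi₀, hmin⟩ := Finset.exists_min_image (Finset.Ioo 0 α.length) (α.drop ·)
    ⟨1, Finset.mem_Ioo.2 ⟨one_pos, h⟩⟩
  rw [Finset.mem_Ioo] at hi₀
  exact ⟨i₀, hi₀.1, hi₀.2, fun j hj hjα => (hmin j (Finset.mem_Ioo.2 ⟨hj, hjα⟩)).not_gt⟩

namespace IsLyndon

variable {α : List ℕ} {i₀ : ℕ}

lemma drop_of_isMinSuffixIndex (hα : IsLyndon α) (h : IsMinSuffixIndex α i₀) :
    IsLyndon (α.drop i₀) := by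
  obtain ⟨hi₀, hi₀α, hmin⟩ := h
  refine ⟨hα.1.drop hi₀α, fun j hj hjα => ?_⟩
  rw [List.length_drop] at hjα
  rw [List.drop_drop]
  refine lt_of_le_of_ne ((not_lt (α := List ℕ)).1 (hmin _ (by omega) (by omega))) fun he => ?_
  have := congrArg List.length he
  simp only [List.length_drop] at this
  omega

/-- If some proper suffix `s` of `α.take i₀` were `≤ α.take i₀`, then either `s` is a prefix of
`α`, and the suffix of `α` after `s` would beat `α.drop i₀`, or `s ++ α.drop i₀ < α`,
contradicting that `α` is Lyndon. -/
lemma take_of_isMinSuffixIndex (hα : IsLyndon α) (h : IsMinSuffixIndex α i₀) :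
    IsLyndon (α.take i₀) := by
  obtain ⟨hi₀, hi₀α, hmin⟩ := h
  refine ⟨hα.1.take hi₀, fun j hj hjα => ?_⟩
  rw [List.length_take, min_eq_left hi₀α.le] at hjα
  set s := (α.take i₀).drop j
  have hslen : s.length = i₀ - j := by simp only [s, List.length_drop, List.length_take]; omega
  have hdrop : α.drop j = s ++ α.drop i₀ := by
    rw [← List.drop_append_of_le_length (by rw [List.length_take]; omega), List.take_append_drop]
  have hαs : α < s ++ α.drop i₀ := hdrop ▸ hα.2 j hj (by omega)
  show α.take i₀ < s
  refine lt_of_not_ge fun hs => ?_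
  have hs : s < α.take i₀ := lt_of_le_of_ne hs fun he => by
    have := congrArg List.length he
    simp only [List.length_take] at this
    omega
  by_cases hpre : s <+: α.take i₀
  · obtain ⟨r, hr⟩ := hpre.trans (List.take_prefix i₀ α)
    have hr' : α.drop s.length = r := by rw [← hr, List.drop_left]
    refine hmin s.length (by omega) (by omega) ?_
    rw [hr']
    exact (List.lex_append_left_iff s _ _).1 (hr ▸ hαs)
  · have := List.Lex.append_of_not_prefix hs hpre (α.drop i₀) (α.drop i₀)
    rw [List.take_append_drop] at this
    exact lt_asymm hαs this

lemma lt_drop_append_take (hα : IsLyndon α) (h : IsMinSuffixIndex α i₀) :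
    α < α.drop i₀ ++ α.take i₀ := by
  obtain ⟨hi₀, hi₀α, -⟩ := h
  have hnp : ¬ α <+: α.drop i₀ := fun hp => by
    have := hp.length_le
    simp only [List.length_drop] at this
    omega
  simpa using List.Lex.append_of_not_prefix (hα.2 i₀ hi₀ hi₀α) hnp [] (α.take i₀)

end IsLyndon

end Lyndon

section Scaling

lemma gcdL_append (l₁ l₂ : List ℕ) : gcdL (l₁ ++ l₂) = Nat.gcd (gcdL l₁) (gcdL l₂) := by
  change ((l₁ ++ l₂ : List ℕ) : Multiset ℕ).gcd = _
  rw [← Multiset.coe_add, Multiset.gcd_add]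
  rfl

lemma gcdL_dvd {l : List ℕ} {a : ℕ} (ha : a ∈ l) : gcdL l ∣ a :=
  Multiset.gcd_dvd (Multiset.mem_coe.2 ha)

lemma IsComposition.gcdL_pos {l : List ℕ} (hl : IsComposition l) : 0 < gcdL l := by
  obtain ⟨a, ha⟩ := List.exists_mem_of_ne_nil l hl.1
  exact Nat.pos_of_dvd_of_pos (gcdL_dvd ha) (hl.2 a ha)

lemma one_le_mul_div {i a g : ℕ} (hi : 1 ≤ i) (ha : 0 < a) (hg : g ∣ a) : 1 ≤ i * a / g :=
  Nat.div_pos ((Nat.le_of_dvd ha hg).trans (Nat.le_mul_of_pos_left a hi))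
    (Nat.pos_of_dvd_of_pos hg ha)

/-- The composition `i·g(α)⁻¹·α`. -/
def scaled (α : List ℕ) (i : ℕ) : List ℕ := α.map fun a => i * a / gcdL α

lemma IsComposition.pos_of_mem_scaled {α : List ℕ} (hα : IsComposition α) {i : ℕ} (hi : 1 ≤ i) :
    ∀ a ∈ scaled α i, 0 < a :=
  List.forall_mem_map.2 fun a ha => one_le_mul_div hi (hα.2 a ha) (gcdL_dvd ha)

lemma sum_scaled (α : List ℕ) (i : ℕ) : (scaled α i).sum = i * (α.map (· / gcdL α)).sum := by
  rw [← List.sum_map_mul_left, scaled]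
  exact congrArg List.sum (List.map_congr_left fun a ha => Nat.mul_div_assoc i (gcdL_dvd ha))

lemma scaled_mul_gcdL_div {α : List ℕ} (hα : IsComposition α) {g : ℕ} (hg : g ∣ gcdL α)
    (i : ℕ) : scaled α (i * gcdL α / g) = α.map fun a => i * a / g := by
  obtain ⟨t, ht⟩ := hg
  have hgt : 0 < g * t := ht ▸ hα.gcdL_pos
  refine List.map_congr_left fun a ha => ?_
  obtain ⟨k, rfl⟩ := gcdL_dvd ha
  have hg : 0 < g := Nat.pos_of_mul_pos_right hgt
  rw [ht, Nat.mul_div_assoc _ (dvd_mul_right g t), Nat.mul_div_cancel_left _ hg,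
    show i * t * (g * t * k) = i * t * k * (g * t) by ring, Nat.mul_div_cancel _ hgt,
    show i * (g * t * k) = i * t * k * g by ring, Nat.mul_div_cancel _ hg]

/-- The word of the monomial `Z_β`: the letter `n` stands for `Z_{n+1}`. -/
def compWord (β : List ℕ) : FreeMonoid ℕ := FreeMonoid.ofList (β.map (· - 1))

lemma compWord_append (β γ : List ℕ) : compWord (β ++ γ) = compWord β * compWord γ := by
  rw [compWord, List.map_append, FreeMonoid.ofList_append]
  rfl

lemma wordGrade_compWord {β : List ℕ} (hβ : ∀ a ∈ β, 0 < a) :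
    wordGrade (compWord β) = toLex (β.sum, β.length) := by
  have : wtWord (compWord β) = β.sum := by
    induction β with
    | nil => rfl
    | cons a β ih =>
      have ha := hβ a List.mem_cons_self
      have := ih fun b hb => hβ b (List.mem_cons_of_mem a hb)
      simp only [wtWord, compWord, FreeMonoid.toList_ofList, List.map_cons, List.sum_cons,
        List.length_cons] at this ⊢
      omega
  rw [wordGrade, this]
  simp [compWord]

lemma List.Lex.map {α β : Type*} {r : α → α → Prop} {s : β → β → Prop} (f : α → β)
    {l l' : List α} (hf : ∀ a ∈ l, ∀ b ∈ l', r a b → s (f a) (f b)) (h : List.Lex r l l') :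
    List.Lex s (l.map f) (l'.map f) := by
  induction h with
  | nil => exact List.Lex.nil
  | rel h => exact List.Lex.rel (hf _ List.mem_cons_self _ List.mem_cons_self h)
  | cons _ ih => exact List.Lex.cons (ih fun a ha b hb => hf a (List.mem_cons_of_mem _ ha) b
      (List.mem_cons_of_mem _ hb))

lemma toList_compWord_lt {β γ : List ℕ} (hβ : ∀ a ∈ β, 0 < a) (hγ : ∀ a ∈ γ, 0 < a)
    (h : β < γ) : FreeMonoid.toList (compWord β) < FreeMonoid.toList (compWord γ) :=
  List.Lex.map _ (fun a ha b hb hab => by have := hβ a ha; have := hγ b hb; omega) h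

lemma wllKey_compWord_lt {β γ : List ℕ} (hβ : ∀ a ∈ β, 0 < a) (hγ : ∀ a ∈ γ, 0 < a)
    (h : wllLt β γ) : wllKey (compWord β) < wllKey (compWord γ) := by
  rw [wllKey, wllKey, Prod.Lex.toLex_lt_toLex, wordGrade_compWord hβ, wordGrade_compWord hγ,
    Prod.Lex.toLex_lt_toLex]
  rcases h with h | ⟨hw, h | ⟨hl, h⟩⟩
  · exact Or.inl (Or.inl h)
  · exact Or.inl (Or.inr ⟨hw, h⟩)
  · exact Or.inr ⟨by simp only [wtC] at hw; rw [hw, hl], toList_compWord_lt hβ hγ h⟩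

end Scaling

section LeadingTerm

lemma hasLeadingWord_Zgen {i : ℕ} (hi : 1 ≤ i) : HasLeadingWord (Zgen i) (compWord [i]) := by
  obtain ⟨j, rfl⟩ : ∃ j, i = j + 1 := ⟨i - 1, by omega⟩
  change HasLeadingWord (MonoidAlgebra.single (FreeMonoid.of j) 1) (FreeMonoid.of j)
  refine ⟨fun v hv => ?_, by simp⟩
  have : v = FreeMonoid.of j := by simpa using hv
  rw [this]

variable {L : ℕ → ℕ → TwoNSymm} {d : List ℕ → ℕ → NSymm}

lemma leadingCurve_of_hasLeadingWord (hd : dSpec L d) {α : List ℕ} (hα : IsLyndon α)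
    (h : ∀ j, 1 ≤ j → HasLeadingWord (d α j) (compWord (scaled α j))) :
    LeadingCurve (d α) (fun j => compWord (scaled α j)) (α.map (· / gcdL α)).sum α.length where
  zero := hd.1 α hα
  hasLeadingWord := h
  wordGrade_eq j hj := by
    rw [wordGrade_compWord (hα.1.pos_of_mem_scaled hj), sum_scaled, scaled, List.length_map]
  one_le := List.length_pos_iff.2 hα.1.1

lemma IsLyndon.toList_compWord_scaled_lt_rotate {α : List ℕ} (hα : IsLyndon α) {i₀ : ℕ}
    (hi₀ : IsMinSuffixIndex α i₀) {i : ℕ} (hi : 1 ≤ i) :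
    FreeMonoid.toList (compWord (α.map fun a => i * a / gcdL α)) <
      FreeMonoid.toList (compWord ((α.drop i₀ ++ α.take i₀).map fun a => i * a / gcdL α)) := by
  have hrot : ∀ a, a ∈ α.drop i₀ ++ α.take i₀ ↔ a ∈ α := fun a =>
    (List.perm_append_comm.trans (by rw [List.take_append_drop])).mem_iff
  have hpos := List.forall_mem_map.1 (hα.1.pos_of_mem_scaled hi)
  refine toList_compWord_lt (hα.1.pos_of_mem_scaled hi)
    (List.forall_mem_map.2 fun a ha => hpos a ((hrot a).1 ha))
    (List.Lex.map _ (fun a _ b hb hab => ?_) (hα.lt_drop_append_take hi₀))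
  exact Nat.div_lt_div_of_lt_of_dvd ((gcdL_dvd ((hrot b).1 hb)).mul_left i)
    (Nat.mul_lt_mul_of_pos_left hab hi)

lemma hasLeadingWord_d_of_isMinSuffixIndex (hL : LIdentity L) (hd : dSpec L d) {α : List ℕ}
    (hα : IsLyndon α) {i₀ : ℕ} (hi₀ : IsMinSuffixIndex α i₀) {i : ℕ} (hi : 1 ≤ i)
    (h₁ : ∀ j, 1 ≤ j → HasLeadingWord (d (α.take i₀) j) (compWord (scaled (α.take i₀) j)))
    (h₂ : ∀ j, 1 ≤ j → HasLeadingWord (d (α.drop i₀) j) (compWord (scaled (α.drop i₀) j))) :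
    HasLeadingWord (d α i) (compWord (scaled α i)) := by
  have hα₁ := hα.take_of_isMinSuffixIndex hi₀
  have hα₂ := hα.drop_of_isMinSuffixIndex hi₀
  have hg : gcdL α = Nat.gcd (gcdL (α.take i₀)) (gcdL (α.drop i₀)) := by
    rw [← gcdL_append, List.take_append_drop]
  have hg₁ : gcdL α ∣ gcdL (α.take i₀) := hg ▸ Nat.gcd_dvd_left _ _
  have hg₂ : gcdL α ∣ gcdL (α.drop i₀) := hg ▸ Nat.gcd_dvd_right _ _
  have hW : ∀ l₁ l₂ : List ℕ, compWord (l₁.map fun a => i * a / gcdL α) *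
      compWord (l₂.map fun a => i * a / gcdL α) =
        compWord ((l₁ ++ l₂).map fun a => i * a / gcdL α) := fun l₁ l₂ => by
    rw [List.map_append, compWord_append]
  have key := hasLeadingWord_substXY_L hL (leadingCurve_of_hasLeadingWord hd hα₁ h₁)
    (leadingCurve_of_hasLeadingWord hd hα₂ h₂)
    (one_le_mul_div hi hα₁.1.gcdL_pos hg₁) (one_le_mul_div hi hα₂.1.gcdL_pos hg₂)
    (by simpa only [scaled_mul_gcdL_div hα₁.1 hg₁, scaled_mul_gcdL_div hα₂.1 hg₂, hW,
      List.take_append_drop] using hα.toList_compWord_scaled_lt_rotate hi₀ hi)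
  rw [hd.2.2 α hα (lt_of_le_of_lt hi₀.1 hi₀.2.1) i₀ hi₀.1 hi₀.2.1 hi₀.2.2 i, scaled]
  simpa only [scaled_mul_gcdL_div hα₁.1 hg₁, scaled_mul_gcdL_div hα₂.1 hg₂, hW,
    List.take_append_drop] using key

theorem hasLeadingWord_d (hL : LIdentity L) (hd : dSpec L d) {α : List ℕ} (hα : IsLyndon α)
    {i : ℕ} (hi : 1 ≤ i) : HasLeadingWord (d α i) (compWord (scaled α i)) := by
  induction hn : α.length using Nat.strong_induction_on generalizing α i with
  | _ n ih =>
    rcases lt_or_ge α.length 2 with hlen | hlen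
    · obtain ⟨a, rfl⟩ := List.length_eq_one_iff.1
        (le_antisymm (by omega) (List.length_pos_iff.2 hα.1.1))
      have ha := hα.1.2 a List.mem_cons_self
      rw [hd.2.1 a ha i, show scaled [a] i = [i] by simp [scaled, gcdL, Nat.mul_div_cancel _ ha]]
      exact hasLeadingWord_Zgen hi
    · obtain ⟨i₀, hi₀⟩ := exists_isMinSuffixIndex hlen
      have := hi₀.1
      have := hi₀.2.1
      refine hasLeadingWord_d_of_isMinSuffixIndex hL hd hα hi₀ hi (fun j hj => ?_) (fun j hj => ?_)
      · exact ih _ (by rw [List.length_take]; omega) (hα.take_of_isMinSuffixIndex hi₀) hj rfl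
      · exact ih _ (by rw [List.length_drop]; omega) (hα.drop_of_isMinSuffixIndex hi₀) hj rfl

end LeadingTerm

/-- The wll-smallest term of `d_α(i)` is `Z_{i·g(α)⁻¹·α}` with coefficient `1`. -/
theorem d_alpha_leading_term (L : ℕ → ℕ → TwoNSymm) (hL : LIdentity L)
    (d : List ℕ → ℕ → NSymm) (hd : dSpec L d) (α : List ℕ) (hα : IsLyndon α)
    (i : ℕ) (hi : 1 ≤ i) :
    coeffC (d α i) (α.map fun a => i * a / gcdL α) = 1 ∧
    ∀ β : List ℕ, IsComposition β → wllLt β (α.map fun a => i * a / gcdL α) →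
      coeffC (d α i) β = 0 := by
  have h := hasLeadingWord_d hL hd hα hi
  refine ⟨h.2, fun β hβ hlt => Finsupp.notMem_support_iff.1 fun hmem => ?_⟩
  exact (h.1 _ hmem).not_gt (wllKey_compWord_lt hβ.2 (hα.1.pos_of_mem_scaled hi) hlt)

end
end

section
/- There is a unique family of elements L_{u,v} ∈ 2NSymm (u, v ≥ 1) such that for all u, v ≥ 1: X_u Y_v − Y_v X_u = ∑ Y_{v₀} X_{u₀} L_{u₁,v₁} ··· L_{u_k,v_k}, the sum being over all k ≥ 1, u₀, v₀ ≥ 0 and u_i, v_i ≥ 1 (1 ≤ i ≤ k) with u₀ + u₁ + ··· + u_k = u and v₀ + v₁ + ··· + v_k = v, subject to the condition that the reduced pairs (u_i/gcd(u_i,v_i), v_i/gcd(u_i,v_i)), i = 1, ..., k, are strictly increasing in the order <_wl (here X₀ = Y₀ = 1). Moreover, each L_{u,v} is homogeneous of X-weight u and Y-weight v (every monomial occurring in L_{u,v} has the sum of its X-indices equal to u and the sum of its Y-indices equal to v), and L_{u,v} − (X_u Y_v − Y_v X_u) is a ℤ-linear combination of monomials of length at least 3 in the generators X_i, Y_j.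 -/
/-!
The defining identity is triangular. Among its summands only the one with `k = 1` and
`u₀ = v₀ = 0` involves `L_{u,v}` itself; every other summand involves only `L_{u',v'}` with
`u' + v' < u + v`. Hence the identity is a recursion on `u + v`, which has exactly one solution.
By induction along the same recursion `L_{u,v}` is bihomogeneous of weight `(u, v)`, so each of
its monomials contains an `X` and a `Y`, i.e. has length at least `2`. Every summand other than
`L_{u,v}` then has length at least `3`: either it has at least two factors `L`, or it has one
together with a nontrivial `Y_{v₀} X_{u₀}`.
-/

open scoped TensorProduct

noncomputable section

theorem MonoidAlgebra.exists_mul_eq_of_coeff_mul_ne_zero {k G : Type*} [Semiring k] [Mul G]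
    {x y : MonoidAlgebra k G} {g : G} (h : (x * y).coeff g ≠ 0) :
    ∃ a b, a * b = g ∧ x.coeff a ≠ 0 ∧ y.coeff b ≠ 0 := by
  classical
  obtain ⟨a, ha, b, hb, rfl⟩ :=
    Finset.mem_mul.1 (support_coeff_mul_subset x y (Finsupp.mem_support_iff.2 h))
  exact ⟨a, b, rfl, Finsupp.mem_support_iff.1 ha, Finsupp.mem_support_iff.1 hb⟩

theorem List.finite_setOf_length_le_forall_mem {α : Type*} {s : Set α} (hs : s.Finite) (n : ℕ) :
    {l : List α | l.length ≤ n ∧ ∀ x ∈ l, x ∈ s}.Finite := by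
  have := hs.to_subtype
  refine ((List.finite_length_le s n).image (List.map (↑))).subset ?_
  rintro l ⟨hl, hls⟩
  lift l to List s using hls
  exact ⟨l, by simpa using hl, rfl⟩

def decompSet (u v : ℕ) : Set ((ℕ × ℕ) × List (ℕ × ℕ)) :=
  {p | p.2 ≠ [] ∧ (∀ q ∈ p.2, 0 < q.1 ∧ 0 < q.2) ∧
      p.1.1 + (p.2.map Prod.fst).sum = u ∧
      p.1.2 + (p.2.map Prod.snd).sum = v ∧
      (p.2.map reduceP).Pairwise wlLt}

def decompTerm (L : ℕ → ℕ → TwoNSymm) (p : (ℕ × ℕ) × List (ℕ × ℕ)) : TwoNSymm :=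
  Ygen p.1.2 * Xgen p.1.1 * (p.2.map fun q => L q.1 q.2).prod

def leadingDecomp (u v : ℕ) : (ℕ × ℕ) × List (ℕ × ℕ) := ((0, 0), [(u, v)])

section Decompositions

variable {L L' : ℕ → ℕ → TwoNSymm} {u v : ℕ} {p : (ℕ × ℕ) × List (ℕ × ℕ)} {q : ℕ × ℕ}

theorem finite_decompSet (u v : ℕ) : (decompSet u v).Finite := by
  have hbox := (Set.finite_Iic u).prod (Set.finite_Iic v)
  refine (hbox.prod (List.finite_setOf_length_le_forall_mem hbox u)).subset ?_
  rintro ⟨⟨a, b⟩, l⟩ ⟨-, hpos, hu, hv, -⟩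
  have hfst : ∀ q ∈ l, q.1 ≤ (l.map Prod.fst).sum := fun q hq =>
    List.le_sum_of_mem (List.mem_map_of_mem hq)
  have hsnd : ∀ q ∈ l, q.2 ≤ (l.map Prod.snd).sum := fun q hq =>
    List.le_sum_of_mem (List.mem_map_of_mem hq)
  have hlen : l.length ≤ (l.map Prod.fst).sum := by
    simpa using List.length_le_sum_of_one_le (l.map Prod.fst) fun _ hi => by
      obtain ⟨q, hq, rfl⟩ := List.mem_map.1 hi
      exact (hpos q hq).1
  dsimp only at hu hv
  simp only [Set.mem_prod, Set.mem_Iic]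
  refine ⟨⟨by omega, by omega⟩, by omega, fun q hq => ⟨?_, ?_⟩⟩
  · have := hfst q hq; omega
  · have := hsnd q hq; omega

def decomps (u v : ℕ) : Finset ((ℕ × ℕ) × List (ℕ × ℕ)) := (finite_decompSet u v).toFinset

theorem mem_decomps : p ∈ decomps u v ↔ p ∈ decompSet u v := Set.Finite.mem_toFinset _

theorem leadingDecomp_mem_decomps (hu : 1 ≤ u) (hv : 1 ≤ v) : leadingDecomp u v ∈ decomps u v :=
  mem_decomps.2 ⟨by simp [leadingDecomp], by simp [leadingDecomp]; omega,
    by simp [leadingDecomp], by simp [leadingDecomp], by simp [leadingDecomp]⟩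

theorem decompTerm_leadingDecomp (L : ℕ → ℕ → TwoNSymm) (u v : ℕ) :
    decompTerm L (leadingDecomp u v) = L u v := by
  simp [decompTerm, leadingDecomp, Xgen, Ygen]

theorem decompTerm_congr (h : ∀ q ∈ p.2, L q.1 q.2 = L' q.1 q.2) :
    decompTerm L p = decompTerm L' p := by
  simp only [decompTerm, List.map_congr_left h]

theorem eq_leadingDecomp (hp : p ∈ decompSet u v) (h₁ : p.1 = (0, 0)) (h₂ : p.2.length = 1) :
    p = leadingDecomp u v := by
  obtain ⟨⟨a, b⟩, l⟩ := p
  obtain ⟨q, rfl⟩ := List.length_eq_one_iff.1 h₂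
  obtain ⟨-, -, hu, hv, -⟩ := hp
  simp only [Prod.mk.injEq] at h₁
  simp only [List.map_cons, List.map_nil, List.sum_cons, List.sum_nil] at hu hv
  simp only [leadingDecomp, Prod.mk.injEq, List.cons.injEq, and_true]
  exact ⟨h₁, Prod.ext (by omega) (by omega)⟩

theorem lt_of_mem_of_ne_leadingDecomp (hp : p ∈ decompSet u v) (hne : p ≠ leadingDecomp u v)
    (hq : q ∈ p.2) : q.1 + q.2 < u + v := by
  obtain ⟨-, hpos, hu, hv, -⟩ := id hp
  have hperm := List.perm_cons_erase hq
  by_contra! hle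
  have hu' := (hperm.map Prod.fst).sum_eq
  have hv' := (hperm.map Prod.snd).sum_eq
  simp only [List.map_cons, List.sum_cons] at hu' hv'
  have hrest : p.2.erase q = [] := List.eq_nil_iff_forall_not_mem.2 fun r hr => by
    have := List.le_sum_of_mem (List.mem_map_of_mem (f := Prod.fst) hr)
    have := (hpos r (List.mem_of_mem_erase hr)).1
    omega
  have hlen : p.2.length = 1 := by simpa [hrest] using hperm.length_eq
  simp only [hrest, List.map_nil, List.sum_nil] at hu' hv'
  exact hne (eq_leadingDecomp hp (Prod.ext (by simp; omega) (by simp; omega)) hlen)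

theorem lt_of_mem_erase_leadingDecomp (hp : p ∈ (decomps u v).erase (leadingDecomp u v))
    (hq : q ∈ p.2) : 1 ≤ q.1 ∧ 1 ≤ q.2 ∧ q.1 + q.2 < u + v := by
  obtain ⟨hne, hp⟩ := Finset.mem_erase.1 hp
  have hp := mem_decomps.1 hp
  exact ⟨(hp.2.1 q hq).1, (hp.2.1 q hq).2, lt_of_mem_of_ne_leadingDecomp hp hne hq⟩

theorem lIdentity_iff_eq_sub_sum : LIdentity L ↔ ∀ u v, 1 ≤ u → 1 ≤ v →
    L u v = Xgen u * Ygen v - Ygen v * Xgen u -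
      ∑ p ∈ (decomps u v).erase (leadingDecomp u v), decompTerm L p := by
  refine forall₄_congr fun u v hu hv => ?_
  change _ = ∑ᶠ p ∈ decompSet u v, decompTerm L p ↔ _
  rw [finsum_mem_eq_finite_toFinset_sum _ (finite_decompSet u v), ← decomps,
    ← Finset.add_sum_erase _ _ (leadingDecomp_mem_decomps hu hv), decompTerm_leadingDecomp,
    eq_sub_iff_add_eq, eq_comm]

@[elab_as_elim]
theorem induction_on_decomps {P : ℕ → ℕ → Prop}
    (ih : ∀ u v, 1 ≤ u → 1 ≤ v →
      (∀ p ∈ (decomps u v).erase (leadingDecomp u v), ∀ q ∈ p.2, P q.1 q.2) → P u v)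
    (hu : 1 ≤ u) (hv : 1 ≤ v) : P u v := by
  induction hn : u + v using Nat.strong_induction_on generalizing u v with
  | _ n IH =>
    refine ih u v hu hv fun p hp q hq => ?_
    obtain ⟨hq₁, hq₂, hlt⟩ := lt_of_mem_erase_leadingDecomp hp hq
    exact IH _ (hn ▸ hlt) hq₁ hq₂ rfl

-- The guard holds for every summand (`lt_of_mem_erase_leadingDecomp`); it is there only to make
-- the recursion on `u + v` visibly well founded.
def canonicalL (u v : ℕ) : TwoNSymm :=
  Xgen u * Ygen v - Ygen v * Xgen u -
    ∑ p ∈ (decomps u v).erase (leadingDecomp u v),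
      decompTerm (fun a b => if _ : a + b < u + v then canonicalL a b else 0) p
termination_by u + v

theorem lIdentity_canonicalL : LIdentity canonicalL := by
  refine lIdentity_iff_eq_sub_sum.2 fun u v _ _ => ?_
  rw [canonicalL]
  refine congrArg _ (Finset.sum_congr rfl fun p hp => decompTerm_congr fun q hq => ?_)
  exact dif_pos (lt_of_mem_erase_leadingDecomp hp hq).2.2

theorem LIdentity.unique (hL : LIdentity L) (hL' : LIdentity L') (hu : 1 ≤ u) (hv : 1 ≤ v) :
    L u v = L' u v := by
  refine induction_on_decomps (fun u v hu hv ih => ?_) hu hv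
  rw [lIdentity_iff_eq_sub_sum.1 hL u v hu hv, lIdentity_iff_eq_sub_sum.1 hL' u v hu hv]
  exact congrArg _ (Finset.sum_congr rfl fun p hp => decompTerm_congr (ih p hp))

end Decompositions

def IsBihomogeneous (P : TwoNSymm) (a b : ℕ) : Prop :=
  ∀ w, coeffw2 P w ≠ 0 → xwt w = a ∧ ywt w = b

def MinWordLength (P : TwoNSymm) (k : ℕ) : Prop :=
  ∀ w, coeffw2 P w ≠ 0 → k ≤ (FreeMonoid.toList w).length

section Gradings

variable {P Q : TwoNSymm} {a b c d k m : ℕ}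

theorem xwt_mul (w₁ w₂ : FreeMonoid (ℕ ⊕ ℕ)) : xwt (w₁ * w₂) = xwt w₁ + xwt w₂ := by
  simp [xwt]

theorem ywt_mul (w₁ w₂ : FreeMonoid (ℕ ⊕ ℕ)) : ywt (w₁ * w₂) = ywt w₁ + ywt w₂ := by
  simp [ywt]

theorem coeffw2_neg (P : TwoNSymm) (w : FreeMonoid (ℕ ⊕ ℕ)) :
    coeffw2 (-P) w = -coeffw2 P w := rfl

theorem coeffw2_sub (P Q : TwoNSymm) (w : FreeMonoid (ℕ ⊕ ℕ)) :
    coeffw2 (P - Q) w = coeffw2 P w - coeffw2 Q w := rfl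

theorem exists_coeffw2_ne_zero_of_sum {ι : Type*} {s : Finset ι} {f : ι → TwoNSymm}
    {w : FreeMonoid (ℕ ⊕ ℕ)} (h : coeffw2 (∑ i ∈ s, f i) w ≠ 0) :
    ∃ i ∈ s, coeffw2 (f i) w ≠ 0 := by
  rw [coeffw2, MonoidAlgebra.coeff_sum, Finsupp.finsetSum_apply] at h
  exact Finset.exists_ne_zero_of_sum_ne_zero h

theorem eq_of_coeffw2_single_ne_zero {w w' : FreeMonoid (ℕ ⊕ ℕ)} {r : ℤ}
    (h : coeffw2 (MonoidAlgebra.single w' r) w ≠ 0) : w = w' := by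
  by_contra hne
  exact h (by simp [coeffw2, MonoidAlgebra.coeff_single, Ne.symm hne])

theorem isBihomogeneous_single (w' : FreeMonoid (ℕ ⊕ ℕ)) (r : ℤ) :
    IsBihomogeneous (MonoidAlgebra.single w' r) (xwt w') (ywt w') := fun _ hw =>
  eq_of_coeffw2_single_ne_zero hw ▸ ⟨rfl, rfl⟩

theorem isBihomogeneous_Xgen (n : ℕ) : IsBihomogeneous (Xgen n) n 0 := by
  cases n with
  | zero => exact isBihomogeneous_single 1 1
  | succ n => simpa [Xgen, xwt, ywt] using isBihomogeneous_single (FreeMonoid.of (Sum.inl n)) 1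

theorem isBihomogeneous_Ygen (n : ℕ) : IsBihomogeneous (Ygen n) 0 n := by
  cases n with
  | zero => exact isBihomogeneous_single 1 1
  | succ n => simpa [Ygen, xwt, ywt] using isBihomogeneous_single (FreeMonoid.of (Sum.inr n)) 1

theorem IsBihomogeneous.mul (hP : IsBihomogeneous P a b) (hQ : IsBihomogeneous Q c d) :
    IsBihomogeneous (P * Q) (a + c) (b + d) := fun _ hw => by
  obtain ⟨w₁, w₂, rfl, h₁, h₂⟩ := MonoidAlgebra.exists_mul_eq_of_coeff_mul_ne_zero hw
  rw [xwt_mul, ywt_mul, (hP w₁ h₁).1, (hP w₁ h₁).2, (hQ w₂ h₂).1, (hQ w₂ h₂).2]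
  exact ⟨rfl, rfl⟩

theorem IsBihomogeneous.sub (hP : IsBihomogeneous P a b) (hQ : IsBihomogeneous Q a b) :
    IsBihomogeneous (P - Q) a b := fun w hw => by
  by_cases h : coeffw2 P w = 0
  · exact hQ w fun h' => hw (by rw [coeffw2_sub, h, h', sub_zero])
  · exact hP w h

theorem isBihomogeneous_sum {ι : Type*} {s : Finset ι} {f : ι → TwoNSymm}
    (h : ∀ i ∈ s, IsBihomogeneous (f i) a b) : IsBihomogeneous (∑ i ∈ s, f i) a b :=
  fun w hw => by
    obtain ⟨i, hi, hne⟩ := exists_coeffw2_ne_zero_of_sum hw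
    exact h i hi w hne

theorem isBihomogeneous_prod_map {L : ℕ → ℕ → TwoNSymm} {l : List (ℕ × ℕ)}
    (h : ∀ q ∈ l, IsBihomogeneous (L q.1 q.2) q.1 q.2) :
    IsBihomogeneous (l.map fun q => L q.1 q.2).prod (l.map Prod.fst).sum (l.map Prod.snd).sum := by
  induction l with
  | nil => exact isBihomogeneous_single 1 1
  | cons q l ih =>
    simp only [List.map_cons, List.prod_cons, List.sum_cons]
    exact (h q List.mem_cons_self).mul (ih fun q' hq' => h q' (List.mem_cons_of_mem q hq'))

theorem MinWordLength.mono (h : MinWordLength P k) (hmk : m ≤ k) : MinWordLength P m :=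
  fun w hw => hmk.trans (h w hw)

theorem MinWordLength.mul (hP : MinWordLength P k) (hQ : MinWordLength Q m) :
    MinWordLength (P * Q) (k + m) := fun _ hw => by
  obtain ⟨w₁, w₂, rfl, h₁, h₂⟩ := MonoidAlgebra.exists_mul_eq_of_coeff_mul_ne_zero hw
  rw [FreeMonoid.toList_mul, List.length_append]
  exact Nat.add_le_add (hP w₁ h₁) (hQ w₂ h₂)

theorem MinWordLength.neg (h : MinWordLength P k) : MinWordLength (-P) k := fun w hw =>
  h w fun h' => hw (by rw [coeffw2_neg, h', neg_zero])

theorem minWordLength_sum {ι : Type*} {s : Finset ι} {f : ι → TwoNSymm}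
    (h : ∀ i ∈ s, MinWordLength (f i) k) : MinWordLength (∑ i ∈ s, f i) k := fun w hw => by
  obtain ⟨i, hi, hne⟩ := exists_coeffw2_ne_zero_of_sum hw
  exact h i hi w hne

theorem minWordLength_single (w' : FreeMonoid (ℕ ⊕ ℕ)) (r : ℤ) :
    MinWordLength (MonoidAlgebra.single w' r) (FreeMonoid.toList w').length := fun _ hw =>
  (eq_of_coeffw2_single_ne_zero hw).symm ▸ le_rfl

theorem minWordLength_Xgen (n : ℕ) : MinWordLength (Xgen n) (min n 1) := by
  cases n with
  | zero => exact minWordLength_single 1 1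
  | succ n => simpa [Xgen] using minWordLength_single (FreeMonoid.of (Sum.inl n)) 1

theorem minWordLength_Ygen (n : ℕ) : MinWordLength (Ygen n) (min n 1) := by
  cases n with
  | zero => exact minWordLength_single 1 1
  | succ n => simpa [Ygen] using minWordLength_single (FreeMonoid.of (Sum.inr n)) 1

theorem minWordLength_prod_map {L : ℕ → ℕ → TwoNSymm} {l : List (ℕ × ℕ)}
    (h : ∀ q ∈ l, MinWordLength (L q.1 q.2) k) :
    MinWordLength (l.map fun q => L q.1 q.2).prod (k * l.length) := by
  induction l with
  | nil => exact fun _ _ => Nat.zero_le _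
  | cons q l ih =>
    simp only [List.map_cons, List.prod_cons, List.length_cons, Nat.mul_succ, Nat.add_comm _ k]
    exact (h q List.mem_cons_self).mul (ih fun q' hq' => h q' (List.mem_cons_of_mem q hq'))

theorem IsBihomogeneous.minWordLength_two (h : IsBihomogeneous P a b) (ha : 1 ≤ a)
    (hb : 1 ≤ b) : MinWordLength P 2 := fun w hw => by
  obtain ⟨hx, hy⟩ := h w hw
  rcases hl : FreeMonoid.toList w with _ | ⟨s, _ | ⟨s', l⟩⟩
  · simp [xwt, hl] at hx; omega
  · cases s <;> simp [xwt, ywt, hl] at hx hy <;> omega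
  · simp

end Gradings

section Consequences

variable {L : ℕ → ℕ → TwoNSymm} {u v : ℕ} {p : (ℕ × ℕ) × List (ℕ × ℕ)}

theorem isBihomogeneous_decompTerm (hp : p ∈ decompSet u v)
    (h : ∀ q ∈ p.2, IsBihomogeneous (L q.1 q.2) q.1 q.2) :
    IsBihomogeneous (decompTerm L p) u v := by
  obtain ⟨-, -, hu, hv, -⟩ := hp
  have := ((isBihomogeneous_Ygen p.1.2).mul (isBihomogeneous_Xgen p.1.1)).mul
    (isBihomogeneous_prod_map h)
  rwa [zero_add, add_zero, hu, hv] at this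

theorem minWordLength_decompTerm (hp : p ∈ decompSet u v) (hne : p ≠ leadingDecomp u v)
    (h : ∀ q ∈ p.2, MinWordLength (L q.1 q.2) 2) : MinWordLength (decompTerm L p) 3 := by
  refine (((minWordLength_Ygen _).mul (minWordLength_Xgen _)).mul
    (minWordLength_prod_map h)).mono ?_
  have hlen : p.2.length ≠ 0 := by simpa using hp.1
  by_contra! hlt
  exact hne (eq_leadingDecomp hp (Prod.ext (by omega) (by omega)) (by omega))

theorem LIdentity.isBihomogeneous (hL : LIdentity L) (hu : 1 ≤ u) (hv : 1 ≤ v) :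
    IsBihomogeneous (L u v) u v := by
  refine induction_on_decomps (fun u v hu hv ih => ?_) hu hv
  have hXY : IsBihomogeneous (Xgen u * Ygen v) u v := by
    simpa using (isBihomogeneous_Xgen u).mul (isBihomogeneous_Ygen v)
  have hYX : IsBihomogeneous (Ygen v * Xgen u) u v := by
    simpa using (isBihomogeneous_Ygen v).mul (isBihomogeneous_Xgen u)
  rw [lIdentity_iff_eq_sub_sum.1 hL u v hu hv]
  exact (hXY.sub hYX).sub <| isBihomogeneous_sum fun p hp =>
    isBihomogeneous_decompTerm (mem_decomps.1 (Finset.mem_of_mem_erase hp)) (ih p hp)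

theorem LIdentity.minWordLength_sub (hL : LIdentity L) (hu : 1 ≤ u) (hv : 1 ≤ v) :
    MinWordLength (L u v - (Xgen u * Ygen v - Ygen v * Xgen u)) 3 := by
  rw [lIdentity_iff_eq_sub_sum.1 hL u v hu hv, sub_sub_cancel_left]
  refine (minWordLength_sum fun p hp => ?_).neg
  obtain ⟨hne, hp'⟩ := Finset.mem_erase.1 hp
  refine minWordLength_decompTerm (mem_decomps.1 hp') hne fun q hq => ?_
  obtain ⟨hq₁, hq₂, -⟩ := lt_of_mem_erase_leadingDecomp hp hq
  exact (hL.isBihomogeneous hq₁ hq₂).minWordLength_two hq₁ hq₂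

end Consequences

/-- Ditters–Shay bi-isobaric decomposition: existence and uniqueness of the
family `L_{u,v}`, homogeneity, and `L_{u,v} ≡ [X_u, Y_v]` modulo length ≥ 3. -/
theorem ditters_shay :
    (∃ L : ℕ → ℕ → TwoNSymm, LIdentity L) ∧
    (∀ L L' : ℕ → ℕ → TwoNSymm, LIdentity L → LIdentity L' →
      ∀ u v : ℕ, 1 ≤ u → 1 ≤ v → L u v = L' u v) ∧
    (∀ L : ℕ → ℕ → TwoNSymm, LIdentity L → ∀ u v : ℕ, 1 ≤ u → 1 ≤ v →
      (∀ w : FreeMonoid (ℕ ⊕ ℕ), coeffw2 (L u v) w ≠ 0 → xwt w = u ∧ ywt w = v) ∧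
      (∀ w : FreeMonoid (ℕ ⊕ ℕ),
        coeffw2 (L u v - (Xgen u * Ygen v - Ygen v * Xgen u)) w ≠ 0 →
        3 ≤ (FreeMonoid.toList w).length)) :=
  ⟨⟨canonicalL, lIdentity_canonicalL⟩, fun _ _ hL hL' _ _ hu hv => hL.unique hL' hu hv,
    fun _ hL _ _ hu hv => ⟨hL.isBihomogeneous hu hv, hL.minWordLength_sub hu hv⟩⟩
end
end
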